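/- Suppose a distribution p_1 ≥ ... ≥ p_{k+1} > 0 has α := P_k/P_{k+1} > k/(k+1) strictly. If the renormalized top-k entropy satisfies H_k = log k (top-k uniform), then H_{k+1} = α log k + h(α) < log(k+1). -/

import Mathlib

noncomputable def Psum (p : ℕ → ℝ) (k : ℕ) : ℝ := ∑ i ∈ Finset.range k, p i

noncomputable def Hent (p : ℕ → ℝ) (k : ℕ) : ℝ :=
  -∑ i ∈ Finset.range k, (p i / Psum p k) * Real.log (p i / Psum p k)

noncomputable def binEnt (α : ℝ) : ℝ :=
  -α * Real.log α - (1 - α) * Real.log (1 - α)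

/-- If the top-k part is uniform (H_k = log k) and α = P_k/P_{k+1} > k/(k+1),
    then H_{k+1} = α log k + h(α) < log(k+1). -/
theorem strict_case (k : ℕ) (hk : 1 ≤ k) (p : ℕ → ℝ)
    (hpos : ∀ i < k + 1, 0 < p i)
    (hsorted : ∀ i j, i ≤ j → j < k + 1 → p j ≤ p i)
    (α : ℝ) (hα : α = Psum p k / Psum p (k + 1))
    (hαgt : (k : ℝ) / (k + 1) < α)
    (hHk : Hent p k = Real.log k) :
    Hent p (k + 1) = α * Real.log k + binEnt α ∧
      Hent p (k + 1) < Real.log (k + 1) := by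
  have hkR : (0:ℝ) < k := by exact_mod_cast hk
  have hP : 0 < Psum p k := by
    apply Finset.sum_pos
    · intro i hi
      exact hpos i (lt_of_lt_of_le (Finset.mem_range.mp hi) (Nat.le_succ k))
    · exact Finset.nonempty_range_iff.mpr (by omega)
  have hpk : 0 < p k := hpos k (Nat.lt_succ_self k)
  have hQeq : Psum p (k + 1) = Psum p k + p k := Finset.sum_range_succ p k
  have hQ : 0 < Psum p (k + 1) := by rw [hQeq]; linarith
  have hαpos : 0 < α := by rw [hα]; positivity
  have hα1 : α < 1 := by
    rw [hα, div_lt_one hQ, hQeq]; linarith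
  have hβ : 0 < 1 - α := by linarith
  have hlast : p k / Psum p (k + 1) = 1 - α := by
    rw [hα]
    field_simp
    linarith [hQeq]
  have heq : Hent p (k + 1) = α * Real.log k + binEnt α := by
    unfold Hent binEnt
    rw [Finset.sum_range_succ]
    have h1 : ∀ i ∈ Finset.range k,
        p i / Psum p (k + 1) * Real.log (p i / Psum p (k + 1)) =
        α * (p i / Psum p k * Real.log (p i / Psum p k)) +
          Real.log α * (α * (p i / Psum p k)) := by
      intro i hi
      have hpi : 0 < p i := hpos i (lt_of_lt_of_le (Finset.mem_range.mp hi) (Nat.le_succ k))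
      have hrw : p i / Psum p (k + 1) = α * (p i / Psum p k) := by
        rw [hα]; field_simp
      rw [hrw, Real.log_mul (ne_of_gt hαpos) (by positivity)]
      ring
    rw [Finset.sum_congr rfl h1, Finset.sum_add_distrib, ← Finset.mul_sum, ← Finset.mul_sum,
      ← Finset.mul_sum, hlast]
    have hsum1 : ∑ i ∈ Finset.range k, p i / Psum p k = 1 := by
      rw [← Finset.sum_div]
      exact div_self (ne_of_gt hP)
    have hsumH : ∑ i ∈ Finset.range k, p i / Psum p k * Real.log (p i / Psum p k)
        = -Real.log k := by
      have := hHk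
      unfold Hent at this
      linarith
    rw [hsum1, hsumH]
    ring
  refine ⟨heq, ?_⟩
  rw [heq]
  -- now show α * log k + binEnt α < log (k+1)
  have hk1R : (0:ℝ) < (k:ℝ) + 1 := by linarith
  have hx : 0 < (k:ℝ) / (α * ((k:ℝ) + 1)) := by positivity
  have hxlt : (k:ℝ) / (α * ((k:ℝ) + 1)) < 1 := by
    rw [div_lt_one (by positivity)]
    have := (div_lt_iff₀ hk1R).mp hαgt
    linarith
  have hA : Real.log ((k:ℝ) / (α * ((k:ℝ) + 1))) < (k:ℝ) / (α * ((k:ℝ) + 1)) - 1 :=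
    Real.log_lt_sub_one_of_pos hx (ne_of_lt hxlt)
  have hB : Real.log (1 / ((1 - α) * ((k:ℝ) + 1))) ≤ 1 / ((1 - α) * ((k:ℝ) + 1)) - 1 :=
    Real.log_le_sub_one_of_pos (by positivity)
  have e1 : Real.log ((k:ℝ) / (α * ((k:ℝ) + 1))) =
      Real.log k - Real.log α - Real.log ((k:ℝ) + 1) := by
    rw [Real.log_div (ne_of_gt hkR) (by positivity), Real.log_mul (ne_of_gt hαpos) (ne_of_gt hk1R)]
    ring
  have e2 : Real.log (1 / ((1 - α) * ((k:ℝ) + 1))) =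
      -Real.log (1 - α) - Real.log ((k:ℝ) + 1) := by
    rw [one_div, Real.log_inv, Real.log_mul (ne_of_gt hβ) (ne_of_gt hk1R)]
    ring
  have hcomb : α * Real.log ((k:ℝ) / (α * ((k:ℝ) + 1))) +
      (1 - α) * Real.log (1 / ((1 - α) * ((k:ℝ) + 1))) <
      α * ((k:ℝ) / (α * ((k:ℝ) + 1)) - 1) + (1 - α) * (1 / ((1 - α) * ((k:ℝ) + 1)) - 1) := by
    have := mul_lt_mul_of_pos_left hA hαpos
    have := mul_le_mul_of_nonneg_left hB (le_of_lt hβ)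
    linarith
  have hzero : α * ((k:ℝ) / (α * ((k:ℝ) + 1)) - 1) +
      (1 - α) * (1 / ((1 - α) * ((k:ℝ) + 1)) - 1) = 0 := by
    field_simp
    ring
  rw [e1, e2] at hcomb
  rw [hzero] at hcomb
  have hlogk1 : Real.log ((k:ℝ) + 1) = Real.log ((k + 1 : ℕ) : ℝ) := by push_cast; ring_nf
  unfold binEnt
  push_cast
  nlinarith [hcomb]
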